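/- Let X and α be processes on (Ω,𝓕,P) with X measurable ℝ^d-valued and α measurable taking values in a closed convex set C ⊆ ℝ^n, with E[∫_0^t |α_s| ds] < ∞ for all t > 0. Then there exists a jointly Borel measurable function a: ℝ₊ × ℝ^d → C such that for Lebesgue-a.e. t ≥ 0, a(t, X_t) = E[α_t | X_t] almost surely. -/

import Mathlib

/-!
Let `κ` be the conditional distribution of `α` given `(t, X_t)` under `μ ⊗ P` on `ℝ × Ω`, where
`μ` is a finite measure equivalent to Lebesgue measure, and let `a(t, x)` be the barycentre of
`κ (t, x)`. The kernels `t ↦ law(X_t, α_t)` and `t ↦ law(X_t) ⊗ κ (t, ·)` have the same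
composition product with `μ`, so for a.e. `t` the section `κ (t, ·)` is a version of the
conditional distribution of `α_t` given `X_t`, whose barycentre is `E[α_t | X_t]`. Conditional
expectations of `C`-valued integrable variables stay in the closed convex set `C`, so replacing
`a` by a fixed point of `C` wherever it leaves `C` does not affect the identity.
-/

open MeasureTheory Set ProbabilityTheory
open scoped ENNReal

section Slices

variable {T Ω β γ : Type*} [MeasurableSpace T] [MeasurableSpace Ω] [MeasurableSpace β]
  [MeasurableSpace γ]

namespace ProbabilityTheory.Kernel

noncomputable def sliceMap (P : Measure Ω) (f : T × Ω → β) : Kernel T β :=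
  (Kernel.id ×ₖ Kernel.const T P).map f

variable {P : Measure Ω} {f : T × Ω → β}

lemma sliceMap_apply [SFinite P] (hf : Measurable f) (t : T) :
    sliceMap P f t = P.map (fun ω => f (t, ω)) := by
  rw [sliceMap, map_apply _ hf, prod_apply, id_apply, const_apply, Measure.dirac_prod,
    Measure.map_map hf measurable_prodMk_left]
  rfl

instance [IsFiniteMeasure P] : IsFiniteKernel (sliceMap P f) := by
  rw [sliceMap]; infer_instance

instance [SFinite P] : IsSFiniteKernel (sliceMap P f) := by
  rw [sliceMap]; infer_instance

end ProbabilityTheory.Kernel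

namespace MeasureTheory.Measure

lemma compProd_sliceMap (μ : Measure T) [SFinite μ] {P : Measure Ω} [SFinite P]
    {f : T × Ω → β} (hf : Measurable f) :
    μ ⊗ₘ Kernel.sliceMap P f = (μ.prod P).map (fun p => (p.1, f p)) := by
  ext s hs
  rw [compProd_apply hs, map_apply (measurable_fst.prodMk hf) hs,
    prod_apply (hs.preimage (measurable_fst.prodMk hf))]
  refine lintegral_congr fun t => ?_
  rw [Kernel.sliceMap_apply hf, map_apply (by fun_prop) (measurable_prodMk_left hs)]
  rfl

end MeasureTheory.Measure

namespace ProbabilityTheory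

theorem exists_kernel_ae_eq_condDistrib_slice [StandardBorelSpace β] [Nonempty β]
    [MeasurableSpace.CountablyGenerated γ]
    (μ : Measure T) [SFinite μ] (P : Measure Ω) [IsFiniteMeasure P]
    {Y : T × Ω → γ} {Z : T × Ω → β} (hY : Measurable Y) (hZ : Measurable Z) :
    ∃ κ : Kernel (T × γ) β, IsMarkovKernel κ ∧ ∀ᵐ t ∂μ, ∀ᵐ ω ∂P,
      condDistrib (fun ω => Z (t, ω)) (fun ω => Y (t, ω)) P (Y (t, ω)) = κ (t, Y (t, ω)) := by
  -- `condDistrib` and `Kernel.ae_eq_of_compProd_eq` need a finite measure on `T`.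
  set κ := condDistrib Z (fun p => (p.1, Y p)) (μ.toFinite.prod P)
  refine ⟨κ, inferInstance, ?_⟩
  have hcompProd : μ.toFinite ⊗ₘ Kernel.sliceMap P (fun p => (Y p, Z p)) =
      μ.toFinite ⊗ₘ (Kernel.sliceMap P Y ⊗ₖ κ) := by
    rw [← Measure.compProd_assoc', Measure.compProd_sliceMap _ hY,
      compProd_map_condDistrib hZ.aemeasurable, Measure.compProd_sliceMap _ (hY.prodMk hZ),
      Measure.map_map (by fun_prop) (by fun_prop)]
    rfl
  filter_upwards [(absolutelyContinuous_toFinite μ).ae_le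
    (Kernel.ae_eq_of_compProd_eq hcompProd)] with t ht
  have hYt : Measurable fun ω => Y (t, ω) := hY.comp measurable_prodMk_left
  have hZt : Measurable fun ω => Z (t, ω) := hZ.comp measurable_prodMk_left
  rw [Kernel.sliceMap_apply (hY.prodMk hZ), Kernel.compProd_apply_eq_compProd_sectR,
    Kernel.sliceMap_apply hY] at ht
  exact ae_of_ae_map hYt.aemeasurable
    (condDistrib_ae_eq_of_measure_eq_compProd_of_measurable hYt hZt ht)

end ProbabilityTheory

lemma ae_integrable_of_lintegral_Ioc_lt_top {E : Type*} [NormedAddCommGroup E]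
    [MeasurableSpace E] [OpensMeasurableSpace E] [SecondCountableTopology E]
    {P : Measure Ω} [SFinite P] {α : ℝ → Ω → E} (hα : Measurable fun p : ℝ × Ω => α p.1 p.2)
    (hint : ∀ t > (0 : ℝ), ∫⁻ ω, ∫⁻ s in Ioc (0 : ℝ) t, ‖α s ω‖₊ ∂volume ∂P < ⊤) :
    ∀ᵐ t ∂(volume.restrict (Ici (0 : ℝ))), Integrable (α t) P := by
  have hIoi : ⋃ k : ℕ, Ioc (0 : ℝ) (k + 1) = Ioi 0 := iUnion_Ioc_eq_Ioi_self_iff.2 fun x _ =>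
    let ⟨k, hk⟩ := exists_nat_ge x; ⟨k, by linarith⟩
  rw [Measure.restrict_congr_set Ioi_ae_eq_Ici.symm, ← hIoi, ae_restrict_iUnion_iff]
  intro k
  have hnorm : Measurable fun p : ℝ × Ω => (‖α p.1 p.2‖₊ : ℝ≥0∞) := by fun_prop
  have hfin : ∫⁻ s in Ioc (0 : ℝ) (k + 1), ∫⁻ ω, ‖α s ω‖₊ ∂P ∂volume ≠ ⊤ := by
    rw [← lintegral_lintegral_swap (f := fun ω s => (‖α s ω‖₊ : ℝ≥0∞))
      (hnorm.comp measurable_swap).aemeasurable]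
    exact (hint _ (by positivity)).ne
  filter_upwards [ae_lt_top hnorm.lintegral_prod_right' hfin] with t ht
  exact ⟨(hα.comp measurable_prodMk_left).aestronglyMeasurable, ht⟩

end Slices

/-- Brunick–Shreve mimicking lemma: if `X` is an `ℝ^d`-valued measurable process and `α`
a measurable process with values in a closed convex set `C ⊆ ℝ^n` satisfying
`E[∫_0^t |α_s| ds] < ∞` for all `t > 0`, then there is a jointly Borel measurable
`a : ℝ₊ × ℝ^d → C` with `a(t, X_t) = E[α_t | X_t]` a.s., for Lebesgue-a.e. `t ≥ 0`. -/
theorem exists_mimicking_function (d n : ℕ)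
    {Ω : Type*} [MeasurableSpace Ω] (P : Measure Ω) [IsProbabilityMeasure P]
    (C : Set (EuclideanSpace ℝ (Fin n))) (hC : IsClosed C) (hconv : Convex ℝ C)
    (X : ℝ → Ω → EuclideanSpace ℝ (Fin d))
    (hX : Measurable fun p : ℝ × Ω => X p.1 p.2)
    (α : ℝ → Ω → EuclideanSpace ℝ (Fin n))
    (hα : Measurable fun p : ℝ × Ω => α p.1 p.2)
    (hαC : ∀ t ω, α t ω ∈ C)
    (hint : ∀ t > (0 : ℝ),
      ∫⁻ ω, ∫⁻ s in Ioc (0 : ℝ) t, ‖α s ω‖₊ ∂volume ∂P < ⊤) :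
    ∃ a : ℝ × EuclideanSpace ℝ (Fin d) → EuclideanSpace ℝ (Fin n),
      Measurable a ∧ (∀ p, a p ∈ C) ∧
      ∀ᵐ t ∂(volume.restrict (Ici (0 : ℝ))),
        (fun ω => a (t, X t ω))
          =ᵐ[P] P[α t | MeasurableSpace.comap (X t) inferInstance] := by
  classical
  obtain ⟨κ, hκm, hκ⟩ := exists_kernel_ae_eq_condDistrib_slice volume P hX hα
  obtain ⟨ω₀⟩ := nonempty_of_isProbabilityMeasure P
  set b := fun p => ∫ y, y ∂κ p
  have hb : Measurable b := measurable_snd.stronglyMeasurable.integral_kernel_prod_right'.measurable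
  refine ⟨fun p => if b p ∈ C then b p else α 0 ω₀,
    hb.ite (hC.measurableSet.preimage hb) measurable_const,
    fun p => by dsimp only; split_ifs with h; exacts [h, hαC 0 ω₀], ?_⟩
  filter_upwards [ae_restrict_of_ae hκ, ae_integrable_of_lintegral_Ioc_lt_top hα hint]
    with t hκt hαt
  have hXt : Measurable (X t) := hX.comp measurable_prodMk_left
  filter_upwards [condExp_ae_eq_integral_condDistrib' hXt hαt,
    hconv.condExp_mem hXt.comap_le hαt hC (ae_of_all _ (hαC t)), hκt] with ω hce hmem hκω
  have hbω : b (t, X t ω) = P[α t | MeasurableSpace.comap (X t) inferInstance] ω := by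
    rw [hce]; exact congrArg (fun m => ∫ y, y ∂m) hκω.symm
  simp only [hbω, if_pos hmem]
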